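/- Let f be of product type with lim_{m→∞} (1/m) Σ_{n=1}^m s_n(f) = 0, where s_n(f) = Σ_{j>n} sup_{a,b∈A}|f_j(a)−f_j(b)|. Then f is in Yuri's class: lim_{n→∞} (1/n) var_n(S_n(f)) = 0. -/

import Mathlib

/-!
If `x` and `y` agree on their first `m` coordinates, the series for `f x - f y` vanishes
below `m` and is dominated termwise by `v`, so `|f x - f y| ≤ t m`. Applied to the shifts
`T^j x`, `T^j y`, which agree on `n - j` coordinates, this bounds `var_n(S_n f)` by
`t 1 + ⋯ + t n`, and the Cesàro hypothesis makes this bound `o(n)`.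
-/

open Filter Finset Topology

theorem abs_le_of_hasSum_of_eq_zero_of_abs_le {g v : ℕ → ℝ} {G T : ℝ} {m : ℕ}
    (hG : HasSum g G) (hT : HasSum (fun n => v (m + n)) T)
    (hzero : ∀ k < m, g k = 0) (hgv : ∀ k, |g k| ≤ v k) : |G| ≤ T := by
  have htail : HasSum (fun n => g (n + m)) G := by
    simpa [sum_eq_zero fun k hk => hzero k (mem_range.mp hk)] using
      (hasSum_nat_add_iff' m).mpr hG
  exact htail.norm_le_of_bounded hT fun n => by
    rw [Real.norm_eq_abs, add_comm]
    exact hgv _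

theorem abs_sub_le_of_forall_lt_eq {A : Type*} {fn : ℕ → A → ℝ} {f : (ℕ → A) → ℝ} {v : ℕ → ℝ}
    {m : ℕ} {T : ℝ} (hf : ∀ x : ℕ → A, HasSum (fun n => fn n (x n)) (f x))
    (hv : ∀ (n : ℕ) (a b : A), |fn n a - fn n b| ≤ v n) (hT : HasSum (fun n => v (m + n)) T)
    {x y : ℕ → A} (hxy : ∀ i < m, x i = y i) : |f x - f y| ≤ T :=
  abs_le_of_hasSum_of_eq_zero_of_abs_le ((hf x).sub (hf y)) hT
    (fun k hk => by rw [hxy k hk, sub_self]) fun k => hv k _ _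

theorem abs_sum_shift_sub_le {A : Type*} {fn : ℕ → A → ℝ} {f : (ℕ → A) → ℝ} {v t : ℕ → ℝ}
    (hf : ∀ x : ℕ → A, HasSum (fun n => fn n (x n)) (f x))
    (hv : ∀ (n : ℕ) (a b : A), |fn n a - fn n b| ≤ v n)
    (ht : ∀ r : ℕ, HasSum (fun n => v (r + n)) (t r))
    {n : ℕ} {x y : ℕ → A} (hxy : ∀ i < n, x i = y i) :
    |∑ j ∈ range n, f (fun i => x (i + j)) - ∑ j ∈ range n, f (fun i => y (i + j))| ≤
      ∑ j ∈ range n, t (j + 1) := by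
  rw [← sum_sub_distrib]
  calc |∑ j ∈ range n, (f (fun i => x (i + j)) - f (fun i => y (i + j)))|
      ≤ ∑ j ∈ range n, |f (fun i => x (i + j)) - f (fun i => y (i + j))| :=
        abs_sum_le_sum_abs _ _
    _ ≤ ∑ j ∈ range n, t (n - 1 - j + 1) := by
        refine sum_le_sum fun j hj => ?_
        have hj := mem_range.mp hj
        exact abs_sub_le_of_forall_lt_eq hf hv (ht _) fun i hi => hxy _ (by omega)
    _ = ∑ j ∈ range n, t (j + 1) := sum_range_reflect (fun j => t (j + 1)) n

theorem tendsto_comp_add_one_div_of_tendsto_div {u : ℕ → ℝ}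
    (hu : Tendsto (fun m : ℕ => u m / m) atTop (𝓝 0)) :
    Tendsto (fun n : ℕ => u (n + 1) / n) atTop (𝓝 0) := by
  have hratio : Tendsto (fun n : ℕ => ((n : ℝ) + 1) / n) atTop (𝓝 1) := by
    simpa using (tendsto_natCast_div_add_atTop (1 : ℝ)).inv₀ one_ne_zero
  have hshift : Tendsto (fun n : ℕ => u (n + 1) / ((n : ℝ) + 1)) atTop (𝓝 0) := by
    simpa [Function.comp_def] using hu.comp (tendsto_add_atTop_nat 1)
  simpa only [zero_mul] using (hshift.mul hratio).congr fun n =>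
    div_mul_div_cancel₀ (Nat.cast_add_one_ne_zero (R := ℝ) n)

theorem tendsto_sum_range_succ_div_of_tendsto_sum_range_div {t : ℕ → ℝ}
    (hces : Tendsto (fun m : ℕ => (∑ n ∈ range m, t n) / (m : ℝ)) atTop (𝓝 0)) :
    Tendsto (fun n : ℕ => (∑ j ∈ range n, t (j + 1)) / n) atTop (𝓝 0) := by
  have hsub := (tendsto_comp_add_one_div_of_tendsto_div hces).sub
    (tendsto_const_div_atTop_nhds_zero_nat (t 0))
  simpa only [sum_range_succ', add_div, add_sub_cancel_right, zero_sub, sub_zero] using hsub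

/-- If the Cesàro averages of `s_n(f)` tend to `0` (with `t n` playing the
role of `s_n`), then `f` of product type is in Yuri's class:
`(1/n) var_n(S_n(f)) → 0`, expressed via a bound `V n` on `var_n(S_n(f))` with
`V n / n → 0`. -/
theorem stmt_3 {A : Type*} (fn : ℕ → A → ℝ) (f : (ℕ → A) → ℝ)
    (hf : ∀ x : ℕ → A, HasSum (fun n => fn n (x n)) (f x))
    (v t : ℕ → ℝ)
    (hv : ∀ (n : ℕ) (a b : A), |fn n a - fn n b| ≤ v n)
    (ht : ∀ r : ℕ, HasSum (fun n => v (r + n)) (t r))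
    (hces : Filter.Tendsto (fun m : ℕ => (∑ n ∈ Finset.range m, t n) / (m : ℝ))
      Filter.atTop (nhds 0)) :
    ∃ V : ℕ → ℝ,
      (∀ (n : ℕ) (x y : ℕ → A), (∀ i < n, x i = y i) →
        |∑ j ∈ Finset.range n, f (fun i => x (i + j)) -
            ∑ j ∈ Finset.range n, f (fun i => y (i + j))| ≤ V n) ∧
      Filter.Tendsto (fun n : ℕ => V n / (n : ℝ)) Filter.atTop (nhds 0) :=
  ⟨fun n => ∑ j ∈ range n, t (j + 1), fun _ _ _ hxy => abs_sum_shift_sub_le hf hv ht hxy,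
    tendsto_sum_range_succ_div_of_tendsto_sum_range_div hces⟩
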